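/- Let s ≥ 1, let n₁,…,n_s be integers with each n_j ≥ 1, and let i₁,…,i_s ∈ {1,2,3}. Then the integer triple rot_{i_s}^{n_s} ⋯ rot_{i_1}^{n_1}(1,1,1) satisfies size(rot_{i_s}^{n_s} ⋯ rot_{i_1}^{n_1}(1,1,1)) ≤ (3ε)^{2^{s−1}(n₁+1)(n₂+1)⋯(n_s+1)}, where ε = (3+√5)/2. -/

import Mathlib

namespace Markoff

variable {R : Type*} [CommRing R]

/-- The three rotations acting on triples. -/
def rot (i : Fin 3) : R × R × R → R × R × R :=
  ![fun x => (x.1, x.2.2, 3 * x.1 * x.2.2 - x.2.1),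
    fun x => (x.2.2, x.2.1, 3 * x.2.1 * x.2.2 - x.1),
    fun x => (x.2.1, 3 * x.2.1 * x.2.2 - x.1, x.2.2)] i

/-- The `i`-th coordinate of a triple. -/
def coord (i : Fin 3) (x : R × R × R) : R := ![x.1, x.2.1, x.2.2] i

/-- The Markoff equation. -/
def IsMarkoff (x : R × R × R) : Prop :=
  x.1 ^ 2 + x.2.1 ^ 2 + x.2.2 ^ 2 = 3 * x.1 * x.2.1 * x.2.2

/-- The nonzero Markoff points mod `p`. -/
def Xstar (p : ℕ) : Set (ZMod p × ZMod p × ZMod p) :=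
  {x | IsMarkoff x ∧ x ≠ (0, 0, 0)}

/-- The rotations as permutations. -/
def rotPerm (i : Fin 3) : Equiv.Perm (R × R × R) where
  toFun := rot i
  invFun := ![fun y => (y.1, 3 * y.1 * y.2.1 - y.2.2, y.2.1),
              fun y => (3 * y.1 * y.2.1 - y.2.2, y.2.1, y.1),
              fun y => (3 * y.1 * y.2.2 - y.2.1, y.1, y.2.2)] i
  left_inv := by
    fin_cases i <;> rintro ⟨a, b, c⟩ <;>
      simp [rot, Matrix.cons_val_zero, Matrix.cons_val_one] <;> ring
  right_inv := by
    fin_cases i <;> rintro ⟨a, b, c⟩ <;>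
      simp [rot, Matrix.cons_val_zero, Matrix.cons_val_one] <;> ring

/-- The `i`-th rotation order: the least `n > 0` with `rot i ^[n] x = x`. -/
noncomputable def ordi (p : ℕ) (i : Fin 3) (x : ZMod p × ZMod p × ZMod p) : ℕ :=
  sInf {n | 0 < n ∧ (rot i)^[n] x = x}

/-- The rotation order: max of the three rotation orders. -/
noncomputable def ordp (p : ℕ) (x : ZMod p × ZMod p × ZMod p) : ℕ :=
  max (ordi p 0 x) (max (ordi p 1 x) (ordi p 2 x))

/-- The size of an integer triple. -/
def size (x : ℤ × ℤ × ℤ) : ℤ := max x.1 (max x.2.1 x.2.2)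

/-- `t` is a lift of `x` mod `p`. -/
def IsLift (p : ℕ) (t : ℤ × ℤ × ℤ) (x : ZMod p × ZMod p × ZMod p) : Prop :=
  IsMarkoff t ∧ ((t.1 : ZMod p), (t.2.1 : ZMod p), (t.2.2 : ZMod p)) = x

noncomputable def eps : ℝ := (3 + Real.sqrt 5) / 2

/-- Apply a word of rotations: `rotWord [(i₁,n₁),…,(i_s,n_s)] x = rot_{i_s}^{n_s} ⋯ rot_{i_1}^{n_1} x`. -/
def rotWord (w : List (Fin 3 × ℕ)) (x : R × R × R) : R × R × R :=
  w.foldl (fun y q => (rot q.1)^[q.2] y) x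

/-- `x` is a maximal triple. -/
def IsMax (p : ℕ) (x : ZMod p × ZMod p × ZMod p) : Prop :=
  ∃ i : Fin 3, ordi p i x = p - 1 ∨ ordi p i x = p + 1 ∨ ordi p i x = 2 * p

/-- The cage: maximal triples in `X*(p)`. -/
def Cage (p : ℕ) : Set (ZMod p × ZMod p × ZMod p) :=
  {x ∈ Xstar p | IsMax p x}

/-- The conic section `C_i(a)`. -/
def Ci (p : ℕ) (i : Fin 3) (a : ZMod p) : Set (ZMod p × ZMod p × ZMod p) :=
  {x ∈ Xstar p | coord i x = a}

/-! Along `rot i` the coordinate `coord i = a` stays fixed and each step replaces a coordinate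
`u` by `3 a v - u ≤ 3 a v`, so `n` steps multiply the size by at most `(3 a)^n`: a block
`rot i ^ n` raises `3 * size` at most to the power `n + 1`. Starting from `3 * size (1, 1, 1) = 3`
this gives `size ≤ 3 ^ ∏ (n_j + 1)`, which is stronger than the claim since `3 ≤ 3 ε`. The
estimates need positive coordinates, and positivity persists along Markoff triples by Vieta. -/

@[simp]
theorem rot_zero (a b c : R) : rot 0 (a, b, c) = (a, c, 3 * a * c - b) := rfl

@[simp]
theorem rot_one (a b c : R) : rot 1 (a, b, c) = (c, b, 3 * b * c - a) := rfl

@[simp]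
theorem rot_two (a b c : R) : rot 2 (a, b, c) = (b, 3 * b * c - a, c) := rfl

@[simp]
theorem coord_zero {α : Type*} (a b c : α) : coord 0 (a, b, c) = a := rfl

@[simp]
theorem coord_one {α : Type*} (a b c : α) : coord 1 (a, b, c) = b := rfl

@[simp]
theorem coord_two {α : Type*} (a b c : α) : coord 2 (a, b, c) = c := rfl

theorem coord_rot_self (i : Fin 3) (x : R × R × R) : coord i (rot i x) = coord i x := by
  fin_cases i <;> rfl

theorem coord_iterate_rot_self (i : Fin 3) (n : ℕ) (x : R × R × R) :
    coord i ((rot i)^[n] x) = coord i x :=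
  Function.Iterate.rec (fun y => coord i y = coord i x) rfl
    (fun y hy => (coord_rot_self i y).trans hy) n

theorem isMarkoff_rot {x : R × R × R} (hx : IsMarkoff x) (i : Fin 3) : IsMarkoff (rot i x) := by
  obtain ⟨a, b, c⟩ := x
  unfold IsMarkoff at hx ⊢
  fin_cases i <;>
    simp only [Fin.zero_eta, Fin.mk_one, Fin.reduceFinMk, rot_zero, rot_one, rot_two] <;>
    linear_combination hx

theorem isMarkoff_iterate_rot {x : R × R × R} (hx : IsMarkoff x) (i : Fin 3) (n : ℕ) :
    IsMarkoff ((rot i)^[n] x) :=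
  Function.Iterate.rec IsMarkoff hx (fun _ hy => isMarkoff_rot hy i) n

section Ordered

variable [LinearOrder R]

def IsPos (x : R × R × R) : Prop := 0 < x.1 ∧ 0 < x.2.1 ∧ 0 < x.2.2

theorem coord_pos {x : R × R × R} (hp : IsPos x) (i : Fin 3) : 0 < coord i x := by
  fin_cases i <;> simp [coord, hp.1, hp.2.1, hp.2.2]

variable [IsStrictOrderedRing R]

theorem isPos_rot {x : R × R × R} (hm : IsMarkoff x) (hp : IsPos x) (i : Fin 3) :
    IsPos (rot i x) := by
  obtain ⟨a, b, c⟩ := x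
  obtain ⟨ha, hb, hc⟩ := hp
  dsimp only [IsMarkoff] at hm ha hb hc
  -- Vieta: the new coordinate `3 a c - b` is the second root of `t² - 3 a c t + a² + c²`,
  -- so its product with the old one `b` is `a² + c² > 0`.
  fin_cases i <;>
    simp only [Fin.zero_eta, Fin.mk_one, Fin.reduceFinMk, rot_zero, rot_one, rot_two] <;>
    refine ⟨?_, ?_, ?_⟩ <;>
    nlinarith [mul_pos ha hb, mul_pos hb hc, mul_pos ha hc]

theorem isPos_iterate_rot {x : R × R × R} (hm : IsMarkoff x) (hp : IsPos x) (i : Fin 3)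
    (n : ℕ) : IsPos ((rot i)^[n] x) :=
  (Function.Iterate.rec (fun y => IsMarkoff y ∧ IsPos y) ⟨hm, hp⟩
    (fun _ hy => ⟨isMarkoff_rot hy.1 i, isPos_rot hy.1 hy.2 i⟩) n).2

end Ordered

theorem coord_le_size (i : Fin 3) (x : ℤ × ℤ × ℤ) : coord i x ≤ size x := by
  fin_cases i <;> simp [coord, size]

theorem size_pos {x : ℤ × ℤ × ℤ} (hp : IsPos x) : 0 < size x :=
  (coord_pos hp 0).trans_le (coord_le_size 0 x)

theorem size_rot_le {x : ℤ × ℤ × ℤ} (hp : IsPos x) (i : Fin 3) :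
    size (rot i x) ≤ 3 * coord i x * size x := by
  obtain ⟨a, b, c⟩ := x
  obtain ⟨ha, hb, hc⟩ := hp
  dsimp only at ha hb hc
  have has : a ≤ size (a, b, c) := le_max_left _ _
  have hbs : b ≤ size (a, b, c) := (le_max_left _ _).trans (le_max_right _ _)
  have hcs : c ≤ size (a, b, c) := (le_max_right _ _).trans (le_max_right _ _)
  set S := size (a, b, c)
  unfold size
  fin_cases i <;>
    simp only [Fin.zero_eta, Fin.mk_one, Fin.reduceFinMk, rot_zero, rot_one, rot_two,
      coord_zero, coord_one, coord_two] <;>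
    refine max_le ?_ (max_le ?_ ?_) <;> nlinarith

theorem size_iterate_rot_le {x : ℤ × ℤ × ℤ} (hm : IsMarkoff x) (hp : IsPos x) (i : Fin 3)
    (n : ℕ) : size ((rot i)^[n] x) ≤ (3 * coord i x) ^ n * size x := by
  induction n with
  | zero => simp
  | succ n ih =>
    have hstep := size_rot_le (isPos_iterate_rot hm hp i n) i
    rw [coord_iterate_rot_self] at hstep
    have ha : 0 ≤ 3 * coord i x := by linarith [coord_pos hp i]
    calc size ((rot i)^[n + 1] x) = size (rot i ((rot i)^[n] x)) :=
          by rw [Function.iterate_succ_apply']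
      _ ≤ 3 * coord i x * size ((rot i)^[n] x) := hstep
      _ ≤ 3 * coord i x * ((3 * coord i x) ^ n * size x) := by gcongr
      _ = (3 * coord i x) ^ (n + 1) * size x := by ring

theorem three_mul_size_iterate_rot_le {x : ℤ × ℤ × ℤ} (hm : IsMarkoff x) (hp : IsPos x)
    (i : Fin 3) (n : ℕ) : 3 * size ((rot i)^[n] x) ≤ (3 * size x) ^ (n + 1) := by
  have ha : 3 * coord i x ≤ 3 * size x := by linarith [coord_le_size i x]
  calc 3 * size ((rot i)^[n] x) ≤ 3 * ((3 * coord i x) ^ n * size x) := by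
        linarith [size_iterate_rot_le hm hp i n]
    _ ≤ 3 * ((3 * size x) ^ n * size x) := by
        gcongr
        · exact (size_pos hp).le
        · linarith [coord_pos hp i]
    _ = (3 * size x) ^ (n + 1) := by ring

theorem three_mul_size_rotWord_le (w : List (Fin 3 × ℕ)) {x : ℤ × ℤ × ℤ}
    (hm : IsMarkoff x) (hp : IsPos x) : 3 * size (rotWord w x) ≤ (3 * size x) ^ (w.map (fun q => q.2 + 1)).prod := by
  induction w generalizing x with
  | nil => simp [rotWord]
  | cons q w ih =>
    set y := (rot q.1)^[q.2] x
    have hy := ih (isMarkoff_iterate_rot hm q.1 q.2) (isPos_iterate_rot hm hp q.1 q.2)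
    calc 3 * size (rotWord (q :: w) x) = 3 * size (rotWord w y) := rfl
      _ ≤ (3 * size y) ^ (w.map (fun q => q.2 + 1)).prod := hy
      _ ≤ ((3 * size x) ^ (q.2 + 1)) ^ (w.map (fun q => q.2 + 1)).prod := by
          gcongr
          · linarith [size_pos (isPos_iterate_rot hm hp q.1 q.2)]
          · exact three_mul_size_iterate_rot_le hm hp q.1 q.2
      _ = (3 * size x) ^ ((q :: w).map (fun q => q.2 + 1)).prod := by
          rw [← pow_mul, List.map_cons, List.prod_cons]

theorem one_le_eps : 1 ≤ eps := by
  unfold eps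
  linarith [Real.sqrt_nonneg 5]

theorem stmt_3_general (w : List (Fin 3 × ℕ)) :
    (size (rotWord w ((1, 1, 1) : ℤ × ℤ × ℤ)) : ℝ) ≤
      (3 * eps) ^ (2 ^ (w.length - 1) * (w.map (fun q => q.2 + 1)).prod) := by
  set P := (w.map (fun q => q.2 + 1)).prod
  have hword : 3 * size (rotWord w ((1, 1, 1) : ℤ × ℤ × ℤ)) ≤ 3 ^ P := by
    simpa [size] using three_mul_size_rotWord_le w (x := (1, 1, 1))
      (by norm_num [IsMarkoff]) (by norm_num [IsPos])
  have hsize : size (rotWord w ((1, 1, 1) : ℤ × ℤ × ℤ)) ≤ 3 ^ P := by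
    linarith [pow_nonneg (by norm_num : (0 : ℤ) ≤ 3) P]
  have h3eps : (3 : ℝ) ≤ 3 * eps := by linarith [one_le_eps]
  calc (size (rotWord w ((1, 1, 1) : ℤ × ℤ × ℤ)) : ℝ) ≤ 3 ^ P := by exact_mod_cast hsize
    _ ≤ (3 * eps) ^ P := pow_le_pow_left₀ (by norm_num) h3eps P
    _ ≤ (3 * eps) ^ (2 ^ (w.length - 1) * P) :=
        pow_le_pow_right₀ (by linarith) (Nat.le_mul_of_pos_left P (by positivity))

theorem stmt_3 (w : List (Fin 3 × ℕ)) (hw : w ≠ []) (hpos : ∀ q ∈ w, 1 ≤ q.2) :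
    (size (rotWord w ((1, 1, 1) : ℤ × ℤ × ℤ)) : ℝ) ≤
      (3 * eps) ^ (2 ^ (w.length - 1) * (w.map (fun q => q.2 + 1)).prod) :=
  stmt_3_general w

end Markoff
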